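/- For every integer n ≥ 3, the cycle graph C_n admits an adapted complex structure if and only if n = 3 or n = 4. -/

import Mathlib

/-!  Framework: the 2-step nilpotent Lie algebra `𝔫_G` associated to a finite simple
graph `G` (Dani–Mainkar construction), and adapted complex structures on it. -/

open scoped BigOperators

namespace GraphLie

variable {V : Type*} [Fintype V] [LinearOrder V]

/-- The underlying real vector space of the Lie algebra `𝔫_G` associated to a graph `G`:
real-valued functions on its basis `V ⊕ G.edgeSet` (vertices and edges). -/
abbrev Niln (G : SimpleGraph V) : Type _ := (V ⊕ G.edgeSet) → ℝ

variable (G : SimpleGraph V) [DecidableRel G.Adj]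

/-- The basis vector of `𝔫_G` corresponding to the vertex `v`. -/
noncomputable def vtx (v : V) : Niln G := Pi.single (Sum.inl v) 1

/-- The basis vector of `𝔫_G` corresponding to the edge `e`. -/
noncomputable def edg (e : G.edgeSet) : Niln G := Pi.single (Sum.inr e) 1

/-- The basis vector of `𝔫_G` corresponding to a vertex or an edge. -/
noncomputable def basisVec (b : V ⊕ G.edgeSet) : Niln G := Pi.single b 1

/-- The bracket of two vertex generators: for adjacent vertices `i < j` (with respect to
the chosen labeling of the vertices) `[v_i, v_j] = e_{i,j}` and `[v_j, v_i] = -e_{i,j}`;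
non-adjacent vertices commute. -/
noncomputable def bracketVtx (i j : V) : Niln G :=
  if h : G.Adj i j then
    (if i < j then edg G ⟨s(i, j), G.mem_edgeSet.mpr h⟩
     else - edg G ⟨s(i, j), G.mem_edgeSet.mpr h⟩)
  else 0

/-- The Lie bracket of `𝔫_G`, extended bilinearly from the generators; all the
edge generators are central. -/
noncomputable def bracket (x y : Niln G) : Niln G :=
  ∑ i : V, ∑ j : V, (x (Sum.inl i) * y (Sum.inl j)) • bracketVtx G i j

/-- An adapted complex structure on the graph `G`: a linear endomorphism `J` of `𝔫_G`
with `J ∘ J = -id`, whose Nijenhuis tensor vanishes, and which sends each basis vector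
(vertex or edge) to plus or minus a basis vector. -/
structure AdaptedCS : Type _ where
  J : Niln G →ₗ[ℝ] Niln G
  j_squared : ∀ x, J (J x) = -x
  integrable : ∀ x y,
    bracket G x y + J (bracket G (J x) y + bracket G x (J y)) - bracket G (J x) (J y) = 0
  adapted : ∀ b : V ⊕ G.edgeSet,
    (∃ b', J (basisVec G b) = basisVec G b') ∨ (∃ b', J (basisVec G b) = - basisVec G b')

variable {G}

/-- An edge of `G` joining vertices `v` and `w` is distinguished if `Jv = w` or `Jw = v`. -/
def AdaptedCS.Distinguished (Jc : AdaptedCS G) (e : G.edgeSet) : Prop :=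
  ∃ v w : V, (e : Sym2 V) = s(v, w) ∧
    (Jc.J (vtx G v) = vtx G w ∨ Jc.J (vtx G w) = vtx G v)

end GraphLie

/-- The cycle graph `C_n` on the vertex set `Fin n`: vertex `i` is adjacent to the
vertices `i ± 1` (cyclically). -/
def cycleG (n : ℕ) : SimpleGraph (Fin n) where
  Adj i j := i ≠ j ∧ ((j : ℕ) = ((i : ℕ) + 1) % n ∨ (i : ℕ) = ((j : ℕ) + 1) % n)
  symm := by
    constructor
    intro i j h
    exact ⟨h.1.symm, h.2.symm⟩
  loopless := ⟨fun i h => h.1 rfl⟩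

instance (n : ℕ) : DecidableRel (cycleG n).Adj := fun i j =>
  inferInstanceAs
    (Decidable (i ≠ j ∧ ((j : ℕ) = ((i : ℕ) + 1) % n ∨ (i : ℕ) = ((j : ℕ) + 1) % n)))


namespace GraphLie

variable {V : Type*} [Fintype V] [LinearOrder V]
variable (G : SimpleGraph V) [DecidableRel G.Adj]

-- my lemmas
set_option linter.unusedSectionVars false

lemma basisVec_apply (b c : V ⊕ G.edgeSet) :
    basisVec G b c = if c = b then 1 else 0 := by
  unfold basisVec; rw [Pi.single_apply]

lemma bracket_basis_inl_inl (i j : V) :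
    bracket G (basisVec G (Sum.inl i)) (basisVec G (Sum.inl j)) = bracketVtx G i j := by
  have h1 : ∀ k : V, (basisVec G (Sum.inl i)) (Sum.inl k) = if k = i then 1 else 0 := by
    intro k; rw [basisVec_apply]; simp
  have h2 : ∀ k : V, (basisVec G (Sum.inl j)) (Sum.inl k) = if k = j then 1 else 0 := by
    intro k; rw [basisVec_apply]; simp
  unfold bracket
  simp only [h1, h2, ite_mul, one_mul, zero_mul, ite_smul, zero_smul, one_smul]
  rw [Finset.sum_comm]
  simp [Finset.sum_ite_eq']

lemma bracket_inr_left (e : G.edgeSet) (y : Niln G) :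
    bracket G (basisVec G (Sum.inr e)) y = 0 := by
  have h1 : ∀ k : V, (basisVec G (Sum.inr e)) (Sum.inl k) = 0 := by
    intro k; rw [basisVec_apply]; simp
  unfold bracket
  simp [h1]

lemma bracket_inr_right (e : G.edgeSet) (x : Niln G) :
    bracket G x (basisVec G (Sum.inr e)) = 0 := by
  have h1 : ∀ k : V, (basisVec G (Sum.inr e)) (Sum.inl k) = 0 := by
    intro k; rw [basisVec_apply]; simp
  unfold bracket
  simp [h1]

lemma bracket_smul_left (c : ℝ) (x y : Niln G) :
    bracket G (c • x) y = c • bracket G x y := by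
  unfold bracket
  rw [Finset.smul_sum]
  refine Finset.sum_congr rfl fun i _ => ?_
  rw [Finset.smul_sum]
  refine Finset.sum_congr rfl fun j _ => ?_
  simp [smul_smul, mul_assoc]

lemma bracket_smul_right (c : ℝ) (x y : Niln G) :
    bracket G x (c • y) = c • bracket G x y := by
  unfold bracket
  rw [Finset.smul_sum]
  refine Finset.sum_congr rfl fun i _ => ?_
  rw [Finset.smul_sum]
  refine Finset.sum_congr rfl fun j _ => ?_
  simp [smul_smul]; ring_nf

lemma bracket_add_left (x x' y : Niln G) :
    bracket G (x + x') y = bracket G x y + bracket G x' y := by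
  unfold bracket
  rw [← Finset.sum_add_distrib]
  refine Finset.sum_congr rfl fun i _ => ?_
  rw [← Finset.sum_add_distrib]
  refine Finset.sum_congr rfl fun j _ => ?_
  simp [add_mul, add_smul]

lemma bracket_add_right (x y y' : Niln G) :
    bracket G x (y + y') = bracket G x y + bracket G x y' := by
  unfold bracket
  rw [← Finset.sum_add_distrib]
  refine Finset.sum_congr rfl fun i _ => ?_
  rw [← Finset.sum_add_distrib]
  refine Finset.sum_congr rfl fun j _ => ?_
  simp [mul_add, add_smul]

lemma smul_basis_eq_zero {a : ℝ} {p : V ⊕ G.edgeSet} (h : a • basisVec G p = 0) : a = 0 := by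
  have := congrFun h p
  simpa [basisVec_apply] using this

lemma bracketVtx_adj {i j : V} (h : G.Adj i j) :
    ∃ c : ℝ, (c = 1 ∨ c = -1) ∧
      bracketVtx G i j = c • basisVec G (Sum.inr ⟨s(i, j), G.mem_edgeSet.mpr h⟩) := by
  unfold bracketVtx
  rw [dif_pos h]
  by_cases hlt : i < j
  · exact ⟨1, Or.inl rfl, by rw [if_pos hlt, one_smul]; rfl⟩
  · exact ⟨-1, Or.inr rfl, by rw [if_neg hlt, neg_one_smul]; rfl⟩

lemma bracketVtx_not_adj {i j : V} (h : ¬ G.Adj i j) : bracketVtx G i j = 0 := by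
  unfold bracketVtx; rw [dif_neg h]

lemma bracketVtx_apply_inr (i j : V) (e : G.edgeSet)
    (h : ∀ _ : G.Adj i j, (e : Sym2 V) ≠ s(i, j)) :
    bracketVtx G i j (Sum.inr e) = 0 := by
  by_cases hadj : G.Adj i j
  · obtain ⟨c, _, hc⟩ := bracketVtx_adj G hadj
    rw [hc]
    have hne : e ≠ (⟨s(i, j), G.mem_edgeSet.mpr hadj⟩ : G.edgeSet) := by
      intro he; exact h hadj (by rw [he])
    simp [basisVec_apply, Sum.inr.injEq, hne]
  · rw [bracketVtx_not_adj G hadj]; rfl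

variable {G}

section Extract

variable (Jc : AdaptedCS G)

lemma exists_st : ∃ (t : (V ⊕ G.edgeSet) → (V ⊕ G.edgeSet)) (s : (V ⊕ G.edgeSet) → ℝ),
    ∀ b, (s b = 1 ∨ s b = -1) ∧ Jc.J (basisVec G b) = s b • basisVec G (t b) := by
  have h : ∀ b, ∃ p : ((V ⊕ G.edgeSet) × ℝ),
      (p.2 = 1 ∨ p.2 = -1) ∧ Jc.J (basisVec G b) = p.2 • basisVec G p.1 := by
    intro b
    rcases Jc.adapted b with ⟨b', hb⟩ | ⟨b', hb⟩
    · exact ⟨(b', 1), Or.inl rfl, by rw [hb, one_smul]⟩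
    · exact ⟨(b', -1), Or.inr rfl, by rw [hb, neg_one_smul]⟩
  choose p hp1 hp2 using h
  exact ⟨fun b => (p b).1, fun b => (p b).2, fun b => ⟨hp1 b, hp2 b⟩⟩

variable {Jc}
variable {t : (V ⊕ G.edgeSet) → (V ⊕ G.edgeSet)} {s : (V ⊕ G.edgeSet) → ℝ}
variable (hs : ∀ b, s b = 1 ∨ s b = -1)
variable (hJ : ∀ b, Jc.J (basisVec G b) = s b • basisVec G (t b))

include hs hJ

lemma s_ne_zero (b : V ⊕ G.edgeSet) : s b ≠ 0 := by
  rcases hs b with h | h <;> rw [h] <;> norm_num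

lemma t_invol (b : V ⊕ G.edgeSet) : t (t b) = b ∧ s b * s (t b) = -1 := by
  have h := Jc.j_squared (basisVec G b)
  rw [hJ b, map_smul, hJ (t b), smul_smul] at h
  have hb := congrFun h b
  simp only [Pi.smul_apply, Pi.neg_apply, smul_eq_mul, basisVec_apply, if_pos rfl] at hb
  by_cases heq : t (t b) = b
  · rw [if_pos heq.symm, mul_one] at hb
    exact ⟨heq, hb⟩
  · rw [if_neg (fun hh => heq hh.symm), mul_zero] at hb
    norm_num at hb

lemma t_ne (b : V ⊕ G.edgeSet) : t b ≠ b := by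
  intro h
  have h2 := (t_invol hs hJ b).2
  rw [h] at h2
  rcases hs b with h1 | h1 <;> rw [h1] at h2 <;> norm_num at h2

/-- Nijenhuis condition at a pair of basis vectors, in terms of the data `(t, s)`. -/
lemma nij_basis (a b : V ⊕ G.edgeSet) :
    bracket G (basisVec G a) (basisVec G b)
      + s a • Jc.J (bracket G (basisVec G (t a)) (basisVec G b))
      + s b • Jc.J (bracket G (basisVec G a) (basisVec G (t b)))
      - (s a * s b) • bracket G (basisVec G (t a)) (basisVec G (t b)) = 0 := by
  have h := Jc.integrable (basisVec G a) (basisVec G b)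
  rw [hJ a, hJ b, bracket_smul_left, bracket_smul_right, bracket_smul_left,
    bracket_smul_right, map_add, map_smul, map_smul, smul_smul] at h
  linear_combination (norm := module) h

end Extract

section Build

lemma single_eq_smul_basis (a : V ⊕ G.edgeSet) (c : ℝ) :
    Pi.single a c = c • basisVec G a := by
  funext b
  by_cases h : b = a <;> simp [Pi.single_apply, basisVec_apply, h]

variable (G)

/-- The Nijenhuis tensor of `J` as a bilinear map. -/
noncomputable def nijMap (J : Niln G →ₗ[ℝ] Niln G) : Niln G →ₗ[ℝ] Niln G →ₗ[ℝ] Niln G :=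
  LinearMap.mk₂ ℝ
    (fun x y => bracket G x y + J (bracket G (J x) y + bracket G x (J y))
        - bracket G (J x) (J y))
    (by
      intro m1 m2 n
      simp only [map_add, bracket_add_left, bracket_add_right]
      module)
    (by
      intro c m n
      simp only [map_add, map_smul, bracket_smul_left, bracket_smul_right, smul_add, smul_sub])
    (by
      intro m n1 n2
      simp only [map_add, bracket_add_left, bracket_add_right]
      module)
    (by
      intro c m n
      simp only [map_add, map_smul, bracket_smul_left, bracket_smul_right, smul_add, smul_sub])

variable {G}

/-- Extend integrability from basis vectors to everything. -/
lemma integrable_of_basis (J : Niln G →ₗ[ℝ] Niln G)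
    (h : ∀ a b, bracket G (basisVec G a) (basisVec G b)
      + J (bracket G (J (basisVec G a)) (basisVec G b)
          + bracket G (basisVec G a) (J (basisVec G b)))
      - bracket G (J (basisVec G a)) (J (basisVec G b)) = 0) :
    ∀ x y, bracket G x y + J (bracket G (J x) y + bracket G x (J y))
      - bracket G (J x) (J y) = 0 := by
  intro x y
  have h' : ∀ a b, nijMap G J (basisVec G a) (basisVec G b) = 0 := h
  have key : nijMap G J x y = 0 := by
    have hx : x = ∑ a, x a • basisVec G a := by
      conv_lhs => rw [← Finset.univ_sum_single x]
      exact Finset.sum_congr rfl fun a _ => single_eq_smul_basis a (x a)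
    have hy : y = ∑ b, y b • basisVec G b := by
      conv_lhs => rw [← Finset.univ_sum_single y]
      exact Finset.sum_congr rfl fun b _ => single_eq_smul_basis b (y b)
    conv_lhs => rw [hx, hy]
    simp [map_sum, map_smul, LinearMap.coe_sum, Finset.sum_apply, h']
  exact key

/-- Builder for J from sign/permutation data. -/
noncomputable def mkJ (G : SimpleGraph V) [DecidableRel G.Adj]
    (t : (V ⊕ G.edgeSet) → (V ⊕ G.edgeSet)) (sg : (V ⊕ G.edgeSet) → ℝ) :
    Niln G →ₗ[ℝ] Niln G where
  toFun x := fun b => sg b * x (t b)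
  map_add' x y := by funext b; simp [mul_add]
  map_smul' c x := by funext b; simp [smul_eq_mul]; ring_nf

lemma mkJ_basis {t : (V ⊕ G.edgeSet) → (V ⊕ G.edgeSet)} {sg : (V ⊕ G.edgeSet) → ℝ}
    (hinv : ∀ b, t (t b) = b) (a : V ⊕ G.edgeSet) :
    mkJ G t sg (basisVec G a) = sg (t a) • basisVec G (t a) := by
  funext b
  simp only [mkJ, LinearMap.coe_mk, AddHom.coe_mk, Pi.smul_apply, smul_eq_mul, basisVec_apply]
  by_cases hb : b = t a
  · subst hb
    rw [if_pos rfl, if_pos (hinv a)]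
    try ring
  · have : t b ≠ a := fun h => hb (by rw [← hinv b, ← h, hinv])
    rw [if_neg this, if_neg hb]
    try ring

/-- Build an adapted complex structure from combinatorial data. -/
noncomputable def mkAdapted (t : (V ⊕ G.edgeSet) → (V ⊕ G.edgeSet))
    (sg : (V ⊕ G.edgeSet) → ℝ)
    (hinv : ∀ b, t (t b) = b)
    (hsg : ∀ b, sg b = 1 ∨ sg b = -1)
    (hprod : ∀ b, sg b * sg (t b) = -1)
    (hnij : ∀ a b, bracket G (basisVec G a) (basisVec G b)
      + mkJ G t sg (bracket G (mkJ G t sg (basisVec G a)) (basisVec G b)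
          + bracket G (basisVec G a) (mkJ G t sg (basisVec G b)))
      - bracket G (mkJ G t sg (basisVec G a)) (mkJ G t sg (basisVec G b)) = 0) :
    AdaptedCS G where
  J := mkJ G t sg
  j_squared := by
    intro x
    funext b
    simp only [mkJ, LinearMap.coe_mk, AddHom.coe_mk, Pi.neg_apply]
    rw [hinv b, ← mul_assoc, hprod b]
    ring
  integrable := integrable_of_basis _ hnij
  adapted := by
    intro b
    rcases hsg (t b) with h | h
    · exact Or.inl ⟨t b, by rw [mkJ_basis hinv, h, one_smul]⟩
    · exact Or.inr ⟨t b, by rw [mkJ_basis hinv, h, neg_one_smul]⟩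

end Build

section Helpers

lemma bracketVtx_adj' {i j : V} (h : G.Adj i j) (e : G.edgeSet)
    (he : (e : Sym2 V) = s(i, j)) :
    ∃ c : ℝ, (c = 1 ∨ c = -1) ∧ bracketVtx G i j = c • basisVec G (Sum.inr e) := by
  obtain ⟨c, hc, h2⟩ := bracketVtx_adj G h
  have : e = ⟨s(i, j), G.mem_edgeSet.mpr h⟩ := Subtype.ext he
  exact ⟨c, hc, by rw [h2, this]⟩


lemma bracket_neg_left (x y : Niln G) : bracket G (-x) y = -bracket G x y := by
  have h := bracket_smul_left G (-1 : ℝ) x y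
  simpa using h

lemma bracket_neg_right (x y : Niln G) : bracket G x (-y) = -bracket G x y := by
  have h := bracket_smul_right G (-1 : ℝ) x y
  simpa using h

lemma term2_helper {a c : ℝ} {p r : V ⊕ G.edgeSet}
    (h : a • basisVec G p - c • basisVec G r = 0) (ha : a ≠ 0) (hpr : p ≠ r) : False := by
  have h2 := congrFun h p
  simp only [Pi.sub_apply, Pi.smul_apply, smul_eq_mul, basisVec_apply, Pi.zero_apply] at h2
  rw [if_neg hpr] at h2
  simp only [eq_self_iff_true, if_true, mul_one, mul_zero] at h2
  apply ha; linarith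

lemma term3_helper {a b c : ℝ} {p q r : V ⊕ G.edgeSet}
    (h : a • basisVec G p + b • basisVec G q - c • basisVec G r = 0)
    (ha : a ≠ 0) (hc : c ≠ 0) (hpr : p ≠ r) : False := by
  by_cases hqp : q = p
  · have h2 := congrFun h r
    simp only [Pi.add_apply, Pi.sub_apply, Pi.smul_apply, smul_eq_mul, basisVec_apply,
      Pi.zero_apply] at h2
    rw [hqp] at h2
    simp only [if_neg (fun hh : r = p => hpr hh.symm), eq_self_iff_true, if_true,
      mul_one, mul_zero] at h2
    apply hc; linarith
  · have h2 := congrFun h p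
    simp only [Pi.add_apply, Pi.sub_apply, Pi.smul_apply, smul_eq_mul, basisVec_apply,
      Pi.zero_apply] at h2
    rw [if_neg (fun hh : p = q => hqp hh.symm), if_neg hpr] at h2
    simp only [eq_self_iff_true, if_true, mul_one, mul_zero] at h2
    apply ha; linarith

end Helpers

end GraphLie

namespace CycleProof

open GraphLie Sum

lemma nat_mod_helper (n x : ℕ) (hx : x < 2 * n) (hn : 0 < n) :
    (x % n = x ∧ x < n) ∨ (x % n + n = x ∧ n ≤ x) := by
  rcases Nat.lt_or_ge x n with h | h
  · exact Or.inl ⟨Nat.mod_eq_of_lt h, h⟩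
  · refine Or.inr ⟨?_, h⟩
    rw [Nat.mod_eq_sub_mod h, Nat.mod_eq_of_lt (by omega)]
    omega

section FinFacts

variable {n : ℕ} [NeZero n]

lemma val_one_of (hn : 3 ≤ n) : ((1 : Fin n)).val = 1 := by
  rw [Fin.val_one']
  exact Nat.mod_eq_of_lt (by omega)

lemma fin1 (hn : 3 ≤ n) (i : Fin n) : i + 1 ≠ i := by
  have hi := i.isLt
  rw [Ne, Fin.ext_iff, Fin.val_add, val_one_of hn]
  have a1 := nat_mod_helper n (i.val + 1) (by omega) (by omega)
  omega

lemma fin2 (hn : 3 ≤ n) (i : Fin n) : i + 1 + 1 ≠ i := by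
  have hi := i.isLt
  rw [Ne, Fin.ext_iff, Fin.val_add, Fin.val_add, val_one_of hn]
  have a1 := nat_mod_helper n (i.val + 1) (by omega) (by omega)
  have hb : (i.val + 1) % n < n := Nat.mod_lt _ (by omega)
  have a2 := nat_mod_helper n ((i.val + 1) % n + 1) (by omega) (by omega)
  omega

lemma fin3 (hn : 5 ≤ n) (i : Fin n) : i + 1 + 1 + 1 ≠ i := by
  have hi := i.isLt
  rw [Ne, Fin.ext_iff, Fin.val_add, Fin.val_add, Fin.val_add, val_one_of (by omega)]
  have a1 := nat_mod_helper n (i.val + 1) (by omega) (by omega)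
  have hb : (i.val + 1) % n < n := Nat.mod_lt _ (by omega)
  have a2 := nat_mod_helper n ((i.val + 1) % n + 1) (by omega) (by omega)
  have hb2 : ((i.val + 1) % n + 1) % n < n := Nat.mod_lt _ (by omega)
  have a3 := nat_mod_helper n (((i.val + 1) % n + 1) % n + 1) (by omega) (by omega)
  omega

lemma fin4 (hn : 5 ≤ n) (i : Fin n) : i + 1 + 1 + 1 + 1 ≠ i := by
  have hi := i.isLt
  rw [Ne, Fin.ext_iff, Fin.val_add, Fin.val_add, Fin.val_add, Fin.val_add,
    val_one_of (by omega)]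
  have a1 := nat_mod_helper n (i.val + 1) (by omega) (by omega)
  have hb : (i.val + 1) % n < n := Nat.mod_lt _ (by omega)
  have a2 := nat_mod_helper n ((i.val + 1) % n + 1) (by omega) (by omega)
  have hb2 : ((i.val + 1) % n + 1) % n < n := Nat.mod_lt _ (by omega)
  have a3 := nat_mod_helper n (((i.val + 1) % n + 1) % n + 1) (by omega) (by omega)
  have hb3 : (((i.val + 1) % n + 1) % n + 1) % n < n := Nat.mod_lt _ (by omega)
  have a4 := nat_mod_helper n ((((i.val + 1) % n + 1) % n + 1) % n + 1) (by omega) (by omega)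
  omega

lemma cyc_adj (hn : 3 ≤ n) (i j : Fin n) :
    (cycleG n).Adj i j ↔ (j = i + 1 ∨ i = j + 1) := by
  have hi := i.isLt
  have hj := j.isLt
  have h1 := val_one_of (n := n) hn
  constructor
  · rintro ⟨hne, h | h⟩
    · left; rw [Fin.ext_iff, Fin.val_add, h1]; omega
    · right; rw [Fin.ext_iff, Fin.val_add, h1]; omega
  · intro h
    have hval : (j : ℕ) = ((i : ℕ) + 1) % n ∨ (i : ℕ) = ((j : ℕ) + 1) % n := by
      rcases h with rfl | rfl
      · left; rw [Fin.val_add, h1]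
      · right; rw [Fin.val_add, h1]
    refine ⟨?_, hval⟩
    have a1 := nat_mod_helper n (i.val + 1) (by omega) (by omega)
    have a2 := nat_mod_helper n (j.val + 1) (by omega) (by omega)
    rw [Ne, Fin.ext_iff]
    omega

lemma cyc_adj_succ (hn : 3 ≤ n) (i : Fin n) : (cycleG n).Adj i (i + 1) :=
  (cyc_adj hn i (i + 1)).mpr (Or.inl rfl)

/-- The edge from `i` to `i+1` in the cycle graph. -/
def cycE (hn : 3 ≤ n) (i : Fin n) : (cycleG n).edgeSet :=
  ⟨s(i, i + 1), (cycleG n).mem_edgeSet.mpr (cyc_adj_succ hn i)⟩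

lemma cycE_val (hn : 3 ≤ n) (i : Fin n) : (cycE hn i : Sym2 (Fin n)) = s(i, i + 1) := rfl

lemma cycE_inj (hn : 3 ≤ n) {a b : Fin n} (h : cycE hn a = cycE hn b) : a = b := by
  have hv : s(a, a + 1) = s(b, b + 1) := congrArg Subtype.val h
  rw [Sym2.eq_iff] at hv
  rcases hv with ⟨h1, _⟩ | ⟨h1, h2⟩
  · exact h1
  · exfalso
    rw [h1] at h2
    exact fin2 hn b h2

end FinFacts

theorem no_adapted {n : ℕ} (hn5 : 5 ≤ n) (Jc : AdaptedCS (cycleG n)) : False := by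
  have hn3 : 3 ≤ n := by omega
  haveI : NeZero n := ⟨by omega⟩
  obtain ⟨t, sg, hts⟩ := exists_st Jc
  have hsg : ∀ b, sg b = 1 ∨ sg b = -1 := fun b => (hts b).1
  have hJ : ∀ b, Jc.J (basisVec (cycleG n) b) = sg b • basisVec (cycleG n) (t b) :=
    fun b => (hts b).2
  have hsgne : ∀ b, sg b ≠ 0 := s_ne_zero hsg hJ
  have hinv : ∀ b, t (t b) = b := fun b => (t_invol hsg hJ b).1
  have htne : ∀ b, t b ≠ b := t_ne hsg hJ
  set E : Fin n → (cycleG n).edgeSet := cycE hn3 with hE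
  -- Stage 1–2: no vertex can pair with an edge.
  have stage : ∀ (w : Fin n) (f : (cycleG n).edgeSet), t (inl w) = inr f → False := by
    intro w f hw
    have htf : t (inr f) = inl w := by rw [← hw, hinv]
    have hN := nij_basis hsg hJ (inr f) (inl (w + 1))
    rw [htf, bracket_inr_left, bracket_inr_left, map_zero, smul_zero,
      bracket_basis_inl_inl] at hN
    obtain ⟨c, hc, he⟩ := bracketVtx_adj' (cyc_adj_succ hn3 w) (E w) rfl
    rw [he, map_smul, hJ (inr (E w))] at hN
    have hcne : c ≠ 0 := by rcases hc with h | h <;> rw [h] <;> norm_num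
    rcases ht1 : t (inl (w + 1)) with u' | g
    · rw [ht1, bracket_basis_inl_inl] at hN
      by_cases hadj' : (cycleG n).Adj w u'
      · rcases (cyc_adj hn3 w u').mp hadj' with h | h
        · exact htne (inl (w + 1)) (by rw [ht1, h])
        · -- h : w = u' + 1 ; stage 2
          have hN2 := nij_basis hsg hJ (inl (w + 1)) (inl (w + 1 + 1))
          rw [ht1, bracket_basis_inl_inl, bracket_basis_inl_inl] at hN2
          have f1 : ¬ (cycleG n).Adj u' (w + 1 + 1) := by
            rw [cyc_adj hn3]
            rintro (h2 | h2)
            · -- w+1+1 = u'+1 = w : so w+1+1 = w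
              rw [← h] at h2
              exact fin2 hn3 w h2
            · -- u' = w+1+1+1, then w = u'+1 = w+1+1+1+1
              rw [h2] at h
              exact fin4 hn5 w h.symm
          rw [bracketVtx_not_adj _ f1, map_zero, smul_zero] at hN2
          rcases ht2 : t (inl (w + 1 + 1)) with q | g
          · rw [ht2, bracket_basis_inl_inl, bracket_basis_inl_inl] at hN2
            have hq1 : q ≠ w + 1 + 1 := by
              intro h2
              exact htne (inl (w + 1 + 1)) (by rw [ht2, h2])
            have hq2 : q ≠ w := by
              intro h2
              have : t (inl q) = inl (w + 1 + 1) := by rw [← ht2, hinv]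
              rw [h2, hw] at this
              exact (by simp at this : False)
            have f2 : ¬ (cycleG n).Adj (w + 1) q := by
              rw [cyc_adj hn3]
              rintro (h2 | h2)
              · exact hq1 h2
              · exact hq2 (add_right_cancel h2.symm)
            rw [bracketVtx_not_adj _ f2, map_zero, smul_zero] at hN2
            obtain ⟨c1, hc1, he1⟩ :=
              bracketVtx_adj' (cyc_adj_succ hn3 (w + 1)) (E (w + 1)) rfl
            rw [he1] at hN2
            have hc1ne : c1 ≠ 0 := by rcases hc1 with h2 | h2 <;> rw [h2] <;> norm_num
            have hval := congrFun hN2 (inr (E (w + 1)))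
            have hbz : bracketVtx (cycleG n) u' q (inr (E (w + 1))) = 0 := by
              apply bracketVtx_apply_inr
              intro hadj2 hsym
              rw [cycE_val, Sym2.eq_iff] at hsym
              rcases hsym with ⟨h2, _⟩ | ⟨_, h2⟩
              · -- w+1 = u', but w = u'+1 : w = w+1+1
                rw [← h2] at h
                exact fin2 hn3 w h.symm
              · -- w+1+1 = u', but w = u'+1 : w = w+1+1+1
                rw [← h2] at h
                exact fin3 hn5 w h.symm
            simp only [Pi.add_apply, Pi.sub_apply, Pi.smul_apply, Pi.zero_apply, smul_eq_mul,
              basisVec_apply, hbz, mul_zero, add_zero, sub_zero, eq_self_iff_true, if_true,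
              mul_one] at hval
            exact hc1ne hval
          · rw [ht2, bracket_inr_right, bracket_inr_right, map_zero, smul_zero, smul_zero] at hN2
            obtain ⟨c1, hc1, he1⟩ :=
              bracketVtx_adj' (cyc_adj_succ hn3 (w + 1)) (E (w + 1)) rfl
            rw [he1] at hN2
            have hc1ne : c1 ≠ 0 := by rcases hc1 with h2 | h2 <;> rw [h2] <;> norm_num
            have hz : c1 • basisVec (cycleG n) (inr (E (w + 1))) = 0 := by
              linear_combination (norm := module) hN2
            exact hc1ne (smul_basis_eq_zero _ hz)
      · rw [bracketVtx_not_adj _ hadj', smul_zero] at hN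
        have hz : (sg (inr f) * (c * sg (inr (E w)))) • basisVec (cycleG n) (t (inr (E w))) = 0 := by
          linear_combination (norm := module) hN
        exact (mul_ne_zero (hsgne _) (mul_ne_zero hcne (hsgne _))) (smul_basis_eq_zero _ hz)
    · rw [ht1, bracket_inr_right, smul_zero] at hN
      have hz : (sg (inr f) * (c * sg (inr (E w)))) • basisVec (cycleG n) (t (inr (E w))) = 0 := by
        linear_combination (norm := module) hN
      exact (mul_ne_zero (hsgne _) (mul_ne_zero hcne (hsgne _))) (smul_basis_eq_zero _ hz)
  -- Stage 3: all vertices pair with vertices; extract sigma and tau.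
  have hV : ∀ i : Fin n, ∃ j, t (inl i) = inl j := by
    intro i
    rcases h : t (inl i) with j | f
    · exact ⟨j, rfl⟩
    · exact (stage i f h).elim
  choose σ hσ using hV
  have hσinv : ∀ i, σ (σ i) = i := by
    intro i
    have h := hinv (inl i)
    rw [hσ i, hσ (σ i)] at h
    exact inl.inj h
  have hσne : ∀ i, σ i ≠ i := by
    intro i h
    exact htne (inl i) (by rw [hσ i, h])
  have hτ : ∀ e, ∃ e', t (inr e) = inr e' := by
    intro e
    rcases h : t (inr e) with j | e'
    · exact (stage j e (by rw [← h, hinv])).elim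
    · exact ⟨e', rfl⟩
  choose τ hτ2 using hτ
  have dagger : ∀ i : Fin n,
      bracketVtx (cycleG n) i (i + 1)
        + sg (inl i) • Jc.J (bracketVtx (cycleG n) (σ i) (i + 1))
        + sg (inl (i + 1)) • Jc.J (bracketVtx (cycleG n) i (σ (i + 1)))
        - (sg (inl i) * sg (inl (i + 1))) • bracketVtx (cycleG n) (σ i) (σ (i + 1)) = 0 := by
    intro i
    have h := nij_basis hsg hJ (inl i) (inl (i + 1))
    rw [hσ i, hσ (i + 1), bracket_basis_inl_inl, bracket_basis_inl_inl,
      bracket_basis_inl_inl, bracket_basis_inl_inl] at h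
    exact h
  have notadj3 : ∀ i : Fin n, ¬ (cycleG n).Adj i (i + 1 + 1 + 1) := by
    intro i
    rw [cyc_adj hn3]
    rintro (h2 | h2)
    · exact fin2 hn3 i (add_right_cancel h2)
    · exact fin4 hn5 i h2.symm
  have claim2 : ∀ i : Fin n, σ i ≠ i + 1 + 1 := by
    intro i hσi
    have hσi' : σ (i + 1 + 1) = i := by rw [← hσi]; exact hσinv i
    by_cases hA : σ (i + 1) + 1 + 1 = i + 1
    · -- Case A
      have hA1 : σ (i + 1) + 1 = i := add_right_cancel hA
      have hN := dagger (i + 1)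
      rw [hσi'] at hN
      have f1 : ¬ (cycleG n).Adj (σ (i + 1)) (i + 1 + 1) := by
        rw [cyc_adj hn3]
        rintro (h2 | h2)
        · have h3 : i + 1 = σ (i + 1) := add_right_cancel h2
          rw [← h3] at hA
          exact fin2 hn3 (i + 1) hA
        · rw [h2] at hA1
          exact fin4 hn5 i hA1
      rw [bracketVtx_not_adj _ f1, map_zero, smul_zero] at hN
      have f2 : (cycleG n).Adj (i + 1) i := (cyc_adj hn3 _ _).mpr (Or.inr rfl)
      obtain ⟨c2, hc2, he2⟩ := bracketVtx_adj' f2 (E i) Sym2.eq_swap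
      rw [he2, map_smul, hJ (inr (E i)), hτ2 (E i)] at hN
      have f3 : (cycleG n).Adj (σ (i + 1)) i := (cyc_adj hn3 _ _).mpr (Or.inl hA1.symm)
      obtain ⟨c3, hc3, he3⟩ := bracketVtx_adj' f3 (E (σ (i + 1))) (by
        show s(σ (i + 1), σ (i + 1) + 1) = s(σ (i + 1), i)
        rw [hA1])
      rw [he3] at hN
      obtain ⟨c1, hc1, he1⟩ := bracketVtx_adj' (cyc_adj_succ hn3 (i + 1)) (E (i + 1)) rfl
      rw [he1] at hN
      refine term3_helper (G := cycleG n)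
        (a := c1) (b := sg (inl (i + 1 + 1)) * (c2 * sg (inr (E i))))
        (c := sg (inl (i + 1)) * sg (inl (i + 1 + 1)) * c3)
        (p := inr (E (i + 1))) (q := inr (τ (E i))) (r := inr (E (σ (i + 1))))
        (by linear_combination (norm := module) hN) ?_ ?_ ?_
      · rcases hc1 with h2 | h2 <;> rw [h2] <;> norm_num
      · have hc3' : c3 ≠ 0 := by rcases hc3 with h2 | h2 <;> rw [h2] <;> norm_num
        exact mul_ne_zero (mul_ne_zero (hsgne _) (hsgne _)) hc3'
      · intro h2
        exact hσne (i + 1) (cycE_inj hn3 (inr.inj h2)).symm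
    · by_cases hB : σ (i + 1) = i + 1 + 1 + 1
      · -- Case B
        have hN := dagger i
        rw [hσi, hB] at hN
        have f2 : (cycleG n).Adj (i + 1 + 1) (i + 1) := (cyc_adj hn3 _ _).mpr (Or.inr rfl)
        obtain ⟨c2, hc2, he2⟩ := bracketVtx_adj' f2 (E (i + 1)) Sym2.eq_swap
        rw [he2, map_smul, hJ (inr (E (i + 1))), hτ2 (E (i + 1))] at hN
        rw [bracketVtx_not_adj _ (notadj3 i), map_zero, smul_zero] at hN
        obtain ⟨c4, hc4, he4⟩ :=
          bracketVtx_adj' (cyc_adj_succ hn3 (i + 1 + 1)) (E (i + 1 + 1)) rfl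
        rw [he4] at hN
        obtain ⟨c1, hc1, he1⟩ := bracketVtx_adj' (cyc_adj_succ hn3 i) (E i) rfl
        rw [he1] at hN
        refine term3_helper (G := cycleG n)
          (a := c1) (b := sg (inl i) * (c2 * sg (inr (E (i + 1)))))
          (c := sg (inl i) * sg (inl (i + 1)) * c4)
          (p := inr (E i)) (q := inr (τ (E (i + 1)))) (r := inr (E (i + 1 + 1)))
          (by linear_combination (norm := module) hN) ?_ ?_ ?_
        · rcases hc1 with h2 | h2 <;> rw [h2] <;> norm_num
        · have hc4' : c4 ≠ 0 := by rcases hc4 with h2 | h2 <;> rw [h2] <;> norm_num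
          exact mul_ne_zero (mul_ne_zero (hsgne _) (hsgne _)) hc4'
        · intro h2
          exact fin2 hn3 i (cycE_inj hn3 (inr.inj h2)).symm
      · -- Case C
        have hN := dagger (i + 1 + 1)
        rw [hσi'] at hN
        rw [bracketVtx_not_adj _ (notadj3 i), map_zero, smul_zero] at hN
        have hd2 : σ (i + 1 + 1 + 1) ≠ i + 1 := by
          intro h2
          apply hB
          have h3 := hσinv (i + 1 + 1 + 1)
          rw [h2] at h3
          exact h3
        have f3 : ¬ (cycleG n).Adj (i + 1 + 1) (σ (i + 1 + 1 + 1)) := by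
          rw [cyc_adj hn3]
          rintro (h2 | h2)
          · exact hσne (i + 1 + 1 + 1) h2
          · exact hd2 (add_right_cancel h2.symm)
        rw [bracketVtx_not_adj _ f3, map_zero, smul_zero] at hN
        obtain ⟨c1, hc1, he1⟩ :=
          bracketVtx_adj' (cyc_adj_succ hn3 (i + 1 + 1)) (E (i + 1 + 1)) rfl
        rw [he1] at hN
        have hc1' : c1 ≠ 0 := by rcases hc1 with h2 | h2 <;> rw [h2] <;> norm_num
        by_cases hD : i = σ (i + 1 + 1 + 1) + 1
        · have f4 : (cycleG n).Adj i (σ (i + 1 + 1 + 1)) := (cyc_adj hn3 _ _).mpr (Or.inr hD)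
          obtain ⟨c4, hc4, he4⟩ := bracketVtx_adj' f4 (E (σ (i + 1 + 1 + 1))) (by
            show s(σ (i + 1 + 1 + 1), σ (i + 1 + 1 + 1) + 1) = s(i, σ (i + 1 + 1 + 1))
            rw [← hD]
            exact Sym2.eq_swap)
          rw [he4] at hN
          refine term2_helper (G := cycleG n) (a := c1)
            (c := sg (inl (i + 1 + 1)) * sg (inl (i + 1 + 1 + 1)) * c4)
            (p := inr (E (i + 1 + 1))) (r := inr (E (σ (i + 1 + 1 + 1))))
            (by linear_combination (norm := module) hN) ?_ ?_
          · exact hc1'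
          · intro h2
            have h3 := cycE_inj hn3 (inr.inj h2)
            have h4 := hσinv (i + 1 + 1 + 1)
            rw [← h3] at h4
            rw [hσi'] at h4
            exact fin3 hn5 i h4.symm
        · have f4 : ¬ (cycleG n).Adj i (σ (i + 1 + 1 + 1)) := by
            rw [cyc_adj hn3]
            rintro (h2 | h2)
            · exact hd2 h2
            · exact hD h2
          rw [bracketVtx_not_adj _ f4, smul_zero] at hN
          have hz : c1 • basisVec (cycleG n) (inr (E (i + 1 + 1))) = 0 := by
            linear_combination (norm := module) hN
          exact hc1' (smul_basis_eq_zero _ hz)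
  -- Claim 1 and conclusion
  have claim1 : ∀ i : Fin n, σ i = i + 1 := by
    intro i
    by_contra hne
    have h2 : ¬ (σ (i + 1) + 1 + 1 = i + 1) := by
      intro h
      apply claim2 (σ (i + 1))
      rw [hσinv]
      exact h.symm
    have hN := dagger i
    have f2 : ¬ (cycleG n).Adj (σ i) (i + 1) := by
      rw [cyc_adj hn3]
      rintro (h3 | h3)
      · exact hσne i (add_right_cancel h3.symm)
      · exact claim2 i h3
    have f3 : ¬ (cycleG n).Adj i (σ (i + 1)) := by
      rw [cyc_adj hn3]
      rintro (h3 | h3)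
      · exact hσne (i + 1) h3
      · exact h2 (by rw [← h3])
    rw [bracketVtx_not_adj _ f2, bracketVtx_not_adj _ f3, map_zero,
      smul_zero, smul_zero] at hN
    obtain ⟨c1, hc1, he1⟩ := bracketVtx_adj' (cyc_adj_succ hn3 i) (E i) rfl
    rw [he1] at hN
    have hc1' : c1 ≠ 0 := by rcases hc1 with h3 | h3 <;> rw [h3] <;> norm_num
    have hbz : bracketVtx (cycleG n) (σ i) (σ (i + 1)) (inr (E i)) = 0 := by
      apply bracketVtx_apply_inr
      intro hadj2 hsym
      rw [cycE_val, Sym2.eq_iff] at hsym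
      rcases hsym with ⟨h3, _⟩ | ⟨_, h3⟩
      · exact hσne i h3.symm
      · exact hne h3.symm
    have hval := congrFun hN (inr (E i))
    simp only [Pi.add_apply, Pi.sub_apply, Pi.smul_apply, Pi.zero_apply, smul_eq_mul,
      basisVec_apply, hbz, mul_zero, add_zero, sub_zero, eq_self_iff_true, if_true,
      mul_one] at hval
    exact hc1' hval
  have i0 : Fin n := ⟨0, by omega⟩
  have ha := claim1 i0
  have hb := claim1 (i0 + 1)
  have hc' := hσinv i0
  rw [ha, hb] at hc'
  exact fin2 hn3 i0 hc'

end CycleProof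


section C3

open GraphLie Sum

-- The three edges of C₃.
def eA : (cycleG 3).edgeSet := ⟨s(0, 1), by decide⟩
def eB : (cycleG 3).edgeSet := ⟨s(1, 2), by decide⟩
def eC : (cycleG 3).edgeSet := ⟨s(0, 2), by decide⟩

lemma edges3 (e : (cycleG 3).edgeSet) : e = eA ∨ e = eB ∨ e = eC := by
  have h : ∀ q : Sym2 (Fin 3), q ∈ (cycleG 3).edgeSet →
      q = s(0, 1) ∨ q = s(1, 2) ∨ q = s(0, 2) := by decide
  rcases h e.1 e.2 with h2 | h2 | h2
  · exact Or.inl (Subtype.ext h2)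
  · exact Or.inr (Or.inl (Subtype.ext h2))
  · exact Or.inr (Or.inr (Subtype.ext h2))

lemma basis3 (b : Fin 3 ⊕ (cycleG 3).edgeSet) :
    b = inl 0 ∨ b = inl 1 ∨ b = inl 2 ∨ b = inr eA ∨ b = inr eB ∨ b = inr eC := by
  rcases b with i | e
  · fin_cases i
    · exact Or.inl rfl
    · exact Or.inr (Or.inl rfl)
    · exact Or.inr (Or.inr (Or.inl rfl))
  · rcases edges3 e with rfl | rfl | rfl
    · exact Or.inr (Or.inr (Or.inr (Or.inl rfl)))
    · exact Or.inr (Or.inr (Or.inr (Or.inr (Or.inl rfl))))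
    · exact Or.inr (Or.inr (Or.inr (Or.inr (Or.inr rfl))))

def t3 : (Fin 3 ⊕ (cycleG 3).edgeSet) → (Fin 3 ⊕ (cycleG 3).edgeSet)
  | inl i => if i = 0 then inl 1 else if i = 1 then inl 0 else inr eA
  | inr e => if e = eA then inl 2 else if e = eB then inr eC else inr eB

def sg3 : (Fin 3 ⊕ (cycleG 3).edgeSet) → ℝ
  | inl i => if i = 0 then -1 else if i = 1 then 1 else -1
  | inr e => if e = eA then 1 else if e = eB then 1 else -1

lemma eBA : (eB = eA) = False := by simp [eA, eB, Sym2.eq_iff]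
lemma eCA : (eC = eA) = False := by simp [eA, eC, Sym2.eq_iff]
lemma eCB : (eC = eB) = False := by simp [eB, eC, Sym2.eq_iff]

lemma t3_vals :
    t3 (inl 0) = inl 1 ∧ t3 (inl 1) = inl 0 ∧ t3 (inl 2) = inr eA ∧
    t3 (inr eA) = inl 2 ∧ t3 (inr eB) = inr eC ∧ t3 (inr eC) = inr eB := by
  refine ⟨rfl, rfl, rfl, ?_, ?_, ?_⟩ <;>
    simp [t3, eBA, eCA, eCB]

lemma sg3_vals :
    sg3 (inl 0) = -1 ∧ sg3 (inl 1) = 1 ∧ sg3 (inl 2) = -1 ∧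
    sg3 (inr eA) = 1 ∧ sg3 (inr eB) = 1 ∧ sg3 (inr eC) = -1 := by
  refine ⟨rfl, rfl, rfl, ?_, ?_, ?_⟩ <;>
    simp [sg3, eBA, eCA, eCB]

lemma t3_invol : ∀ b, t3 (t3 b) = b := by
  intro b
  obtain ⟨h1, h2, h3, h4, h5, h6⟩ := t3_vals
  rcases basis3 b with rfl | rfl | rfl | rfl | rfl | rfl <;>
    simp [h1, h2, h3, h4, h5, h6]

lemma sg3_pm : ∀ b, sg3 b = 1 ∨ sg3 b = -1 := by
  intro b
  obtain ⟨h1, h2, h3, h4, h5, h6⟩ := sg3_vals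
  rcases basis3 b with rfl | rfl | rfl | rfl | rfl | rfl <;> simp [h1, h2, h3, h4, h5, h6]

lemma sg3_prod : ∀ b, sg3 b * sg3 (t3 b) = -1 := by
  intro b
  obtain ⟨h1, h2, h3, h4, h5, h6⟩ := t3_vals
  obtain ⟨g1, g2, g3, g4, g5, g6⟩ := sg3_vals
  rcases basis3 b with rfl | rfl | rfl | rfl | rfl | rfl <;>
    simp [h1, h2, h3, h4, h5, h6, g1, g2, g3, g4, g5, g6]

-- bracketVtx table for C₃
lemma bv3_01 : bracketVtx (cycleG 3) 0 1 = basisVec (cycleG 3) (inr eA) := by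
  unfold bracketVtx
  rw [dif_pos (by decide : (cycleG 3).Adj 0 1), if_pos (by decide : (0 : Fin 3) < 1)]
  rfl

lemma bv3_10 : bracketVtx (cycleG 3) 1 0 = -basisVec (cycleG 3) (inr eA) := by
  unfold bracketVtx
  rw [dif_pos (by decide : (cycleG 3).Adj 1 0), if_neg (by decide : ¬ ((1 : Fin 3) < 0))]
  have : (⟨s(1, 0), (cycleG 3).mem_edgeSet.mpr (by decide)⟩ : (cycleG 3).edgeSet) = eA :=
    Subtype.ext (by exact Sym2.eq_swap)
  rw [this]
  rfl

lemma bv3_12 : bracketVtx (cycleG 3) 1 2 = basisVec (cycleG 3) (inr eB) := by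
  unfold bracketVtx
  rw [dif_pos (by decide : (cycleG 3).Adj 1 2), if_pos (by decide : (1 : Fin 3) < 2)]
  rfl

lemma bv3_21 : bracketVtx (cycleG 3) 2 1 = -basisVec (cycleG 3) (inr eB) := by
  unfold bracketVtx
  rw [dif_pos (by decide : (cycleG 3).Adj 2 1), if_neg (by decide : ¬ ((2 : Fin 3) < 1))]
  have : (⟨s(2, 1), (cycleG 3).mem_edgeSet.mpr (by decide)⟩ : (cycleG 3).edgeSet) = eB :=
    Subtype.ext (by exact Sym2.eq_swap)
  rw [this]
  rfl

lemma bv3_02 : bracketVtx (cycleG 3) 0 2 = basisVec (cycleG 3) (inr eC) := by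
  unfold bracketVtx
  rw [dif_pos (by decide : (cycleG 3).Adj 0 2), if_pos (by decide : (0 : Fin 3) < 2)]
  rfl

lemma bv3_20 : bracketVtx (cycleG 3) 2 0 = -basisVec (cycleG 3) (inr eC) := by
  unfold bracketVtx
  rw [dif_pos (by decide : (cycleG 3).Adj 2 0), if_neg (by decide : ¬ ((2 : Fin 3) < 0))]
  have : (⟨s(2, 0), (cycleG 3).mem_edgeSet.mpr (by decide)⟩ : (cycleG 3).edgeSet) = eC :=
    Subtype.ext (by exact Sym2.eq_swap)
  rw [this]
  rfl

lemma bv3_00 : bracketVtx (cycleG 3) 0 0 = 0 := bracketVtx_not_adj _ (by decide)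
lemma bv3_11 : bracketVtx (cycleG 3) 1 1 = 0 := bracketVtx_not_adj _ (by decide)
lemma bv3_22 : bracketVtx (cycleG 3) 2 2 = 0 := bracketVtx_not_adj _ (by decide)

noncomputable def adapted3 : AdaptedCS (cycleG 3) := by
  refine mkAdapted t3 sg3 t3_invol sg3_pm sg3_prod ?_
  intro a b
  obtain ⟨h1, h2, h3, h4, h5, h6⟩ := t3_vals
  obtain ⟨g1, g2, g3, g4, g5, g6⟩ := sg3_vals
  have J1 : mkJ (cycleG 3) t3 sg3 (basisVec _ (inl 0)) = (1 : ℝ) • basisVec _ (inl 1) := by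
    rw [mkJ_basis t3_invol, h1, g2]
  have J2 : mkJ (cycleG 3) t3 sg3 (basisVec _ (inl 1)) = (-1 : ℝ) • basisVec _ (inl 0) := by
    rw [mkJ_basis t3_invol, h2, g1]
  have J3 : mkJ (cycleG 3) t3 sg3 (basisVec _ (inl 2)) = (1 : ℝ) • basisVec _ (inr eA) := by
    rw [mkJ_basis t3_invol, h3, g4]
  have J4 : mkJ (cycleG 3) t3 sg3 (basisVec _ (inr eA)) = (-1 : ℝ) • basisVec _ (inl 2) := by
    rw [mkJ_basis t3_invol, h4, g3]
  have J5 : mkJ (cycleG 3) t3 sg3 (basisVec _ (inr eB)) = (-1 : ℝ) • basisVec _ (inr eC) := by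
    rw [mkJ_basis t3_invol, h5, g6]
  have J6 : mkJ (cycleG 3) t3 sg3 (basisVec _ (inr eC)) = (1 : ℝ) • basisVec _ (inr eB) := by
    rw [mkJ_basis t3_invol, h6, g5]
  rcases basis3 a with rfl | rfl | rfl | rfl | rfl | rfl <;>
    rcases basis3 b with rfl | rfl | rfl | rfl | rfl | rfl <;>
    simp only [J1, J2, J3, J4, J5, J6, bracket_smul_left, bracket_smul_right,
      bracket_neg_left, bracket_neg_right,
      bracket_basis_inl_inl, bracket_inr_left, bracket_inr_right,
      bv3_00, bv3_01, bv3_02, bv3_10, bv3_11, bv3_12, bv3_20, bv3_21, bv3_22,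
      map_add, map_smul, map_neg, map_zero, smul_zero, smul_neg, neg_smul, neg_zero,
      add_zero, zero_add, sub_zero, zero_sub, one_smul, neg_neg] <;>
    module

end C3

section C4

open GraphLie Sum

def f01 : (cycleG 4).edgeSet := ⟨s(0, 1), by decide⟩
def f12 : (cycleG 4).edgeSet := ⟨s(1, 2), by decide⟩
def f23 : (cycleG 4).edgeSet := ⟨s(2, 3), by decide⟩
def f03 : (cycleG 4).edgeSet := ⟨s(0, 3), by decide⟩

lemma edges4 (e : (cycleG 4).edgeSet) : e = f01 ∨ e = f12 ∨ e = f23 ∨ e = f03 := by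
  have h : ∀ q : Sym2 (Fin 4), q ∈ (cycleG 4).edgeSet →
      q = s(0, 1) ∨ q = s(1, 2) ∨ q = s(2, 3) ∨ q = s(0, 3) := by decide
  rcases h e.1 e.2 with h2 | h2 | h2 | h2
  · exact Or.inl (Subtype.ext h2)
  · exact Or.inr (Or.inl (Subtype.ext h2))
  · exact Or.inr (Or.inr (Or.inl (Subtype.ext h2)))
  · exact Or.inr (Or.inr (Or.inr (Subtype.ext h2)))

lemma basis4 (b : Fin 4 ⊕ (cycleG 4).edgeSet) :
    b = inl 0 ∨ b = inl 1 ∨ b = inl 2 ∨ b = inl 3 ∨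
    b = inr f01 ∨ b = inr f12 ∨ b = inr f23 ∨ b = inr f03 := by
  rcases b with i | e
  · fin_cases i
    · exact Or.inl rfl
    · exact Or.inr (Or.inl rfl)
    · exact Or.inr (Or.inr (Or.inl rfl))
    · exact Or.inr (Or.inr (Or.inr (Or.inl rfl)))
  · rcases edges4 e with rfl | rfl | rfl | rfl
    · exact Or.inr (Or.inr (Or.inr (Or.inr (Or.inl rfl))))
    · exact Or.inr (Or.inr (Or.inr (Or.inr (Or.inr (Or.inl rfl)))))
    · exact Or.inr (Or.inr (Or.inr (Or.inr (Or.inr (Or.inr (Or.inl rfl))))))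
    · exact Or.inr (Or.inr (Or.inr (Or.inr (Or.inr (Or.inr (Or.inr rfl))))))

def t4 : (Fin 4 ⊕ (cycleG 4).edgeSet) → (Fin 4 ⊕ (cycleG 4).edgeSet)
  | inl i => if i = 0 then inl 2 else if i = 1 then inl 3 else
      if i = 2 then inl 0 else inl 1
  | inr e => if e = f01 then inr f12 else if e = f12 then inr f01 else
      if e = f23 then inr f03 else inr f23

def sg4 : (Fin 4 ⊕ (cycleG 4).edgeSet) → ℝ
  | inl i => if i = 0 then -1 else if i = 1 then -1 else 1
  | inr e => if e = f01 then 1 else if e = f12 then -1 else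
      if e = f23 then 1 else -1

lemma f_12_01 : (f12 = f01) = False := by simp [f01, f12, Sym2.eq_iff]
lemma f_23_01 : (f23 = f01) = False := by simp [f01, f23, Sym2.eq_iff]
lemma f_23_12 : (f23 = f12) = False := by simp [f12, f23, Sym2.eq_iff]
lemma f_03_01 : (f03 = f01) = False := by simp [f01, f03, Sym2.eq_iff]
lemma f_03_12 : (f03 = f12) = False := by simp [f12, f03, Sym2.eq_iff]
lemma f_03_23 : (f03 = f23) = False := by simp [f23, f03, Sym2.eq_iff]

lemma t4_vals :
    t4 (inl 0) = inl 2 ∧ t4 (inl 1) = inl 3 ∧ t4 (inl 2) = inl 0 ∧ t4 (inl 3) = inl 1 ∧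
    t4 (inr f01) = inr f12 ∧ t4 (inr f12) = inr f01 ∧
    t4 (inr f23) = inr f03 ∧ t4 (inr f03) = inr f23 := by
  refine ⟨rfl, rfl, rfl, rfl, rfl, ?_, ?_, ?_⟩ <;>
    simp [t4, f_12_01, f_23_01, f_23_12, f_03_01, f_03_12, f_03_23]

lemma sg4_vals :
    sg4 (inl 0) = -1 ∧ sg4 (inl 1) = -1 ∧ sg4 (inl 2) = 1 ∧ sg4 (inl 3) = 1 ∧
    sg4 (inr f01) = 1 ∧ sg4 (inr f12) = -1 ∧ sg4 (inr f23) = 1 ∧ sg4 (inr f03) = -1 := by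
  refine ⟨rfl, rfl, rfl, rfl, rfl, ?_, ?_, ?_⟩ <;>
    simp [sg4, f_12_01, f_23_01, f_23_12, f_03_01, f_03_12, f_03_23]

lemma t4_invol : ∀ b, t4 (t4 b) = b := by
  intro b
  obtain ⟨h1, h2, h3, h4, h5, h6, h7, h8⟩ := t4_vals
  rcases basis4 b with rfl | rfl | rfl | rfl | rfl | rfl | rfl | rfl <;>
    simp [h1, h2, h3, h4, h5, h6, h7, h8]

lemma sg4_pm : ∀ b, sg4 b = 1 ∨ sg4 b = -1 := by
  intro b
  obtain ⟨g1, g2, g3, g4, g5, g6, g7, g8⟩ := sg4_vals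
  rcases basis4 b with rfl | rfl | rfl | rfl | rfl | rfl | rfl | rfl <;>
    simp [g1, g2, g3, g4, g5, g6, g7, g8]

lemma sg4_prod : ∀ b, sg4 b * sg4 (t4 b) = -1 := by
  intro b
  obtain ⟨h1, h2, h3, h4, h5, h6, h7, h8⟩ := t4_vals
  obtain ⟨g1, g2, g3, g4, g5, g6, g7, g8⟩ := sg4_vals
  rcases basis4 b with rfl | rfl | rfl | rfl | rfl | rfl | rfl | rfl <;>
    simp [h1, h2, h3, h4, h5, h6, h7, h8, g1, g2, g3, g4, g5, g6, g7, g8]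

lemma bv4_01 : bracketVtx (cycleG 4) 0 1 = basisVec (cycleG 4) (inr f01) := by
  unfold bracketVtx
  rw [dif_pos (by decide : (cycleG 4).Adj 0 1), if_pos (by decide : (0 : Fin 4) < 1)]
  rfl

lemma bv4_10 : bracketVtx (cycleG 4) 1 0 = -basisVec (cycleG 4) (inr f01) := by
  unfold bracketVtx
  rw [dif_pos (by decide : (cycleG 4).Adj 1 0), if_neg (by decide : ¬ ((1 : Fin 4) < 0))]
  have : (⟨s(1, 0), (cycleG 4).mem_edgeSet.mpr (by decide)⟩ : (cycleG 4).edgeSet) = f01 :=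
    Subtype.ext (by exact Sym2.eq_swap)
  rw [this]; rfl

lemma bv4_12 : bracketVtx (cycleG 4) 1 2 = basisVec (cycleG 4) (inr f12) := by
  unfold bracketVtx
  rw [dif_pos (by decide : (cycleG 4).Adj 1 2), if_pos (by decide : (1 : Fin 4) < 2)]
  rfl

lemma bv4_21 : bracketVtx (cycleG 4) 2 1 = -basisVec (cycleG 4) (inr f12) := by
  unfold bracketVtx
  rw [dif_pos (by decide : (cycleG 4).Adj 2 1), if_neg (by decide : ¬ ((2 : Fin 4) < 1))]
  have : (⟨s(2, 1), (cycleG 4).mem_edgeSet.mpr (by decide)⟩ : (cycleG 4).edgeSet) = f12 :=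
    Subtype.ext (by exact Sym2.eq_swap)
  rw [this]; rfl

lemma bv4_23 : bracketVtx (cycleG 4) 2 3 = basisVec (cycleG 4) (inr f23) := by
  unfold bracketVtx
  rw [dif_pos (by decide : (cycleG 4).Adj 2 3), if_pos (by decide : (2 : Fin 4) < 3)]
  rfl

lemma bv4_32 : bracketVtx (cycleG 4) 3 2 = -basisVec (cycleG 4) (inr f23) := by
  unfold bracketVtx
  rw [dif_pos (by decide : (cycleG 4).Adj 3 2), if_neg (by decide : ¬ ((3 : Fin 4) < 2))]
  have : (⟨s(3, 2), (cycleG 4).mem_edgeSet.mpr (by decide)⟩ : (cycleG 4).edgeSet) = f23 :=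
    Subtype.ext (by exact Sym2.eq_swap)
  rw [this]; rfl

lemma bv4_03 : bracketVtx (cycleG 4) 0 3 = basisVec (cycleG 4) (inr f03) := by
  unfold bracketVtx
  rw [dif_pos (by decide : (cycleG 4).Adj 0 3), if_pos (by decide : (0 : Fin 4) < 3)]
  rfl

lemma bv4_30 : bracketVtx (cycleG 4) 3 0 = -basisVec (cycleG 4) (inr f03) := by
  unfold bracketVtx
  rw [dif_pos (by decide : (cycleG 4).Adj 3 0), if_neg (by decide : ¬ ((3 : Fin 4) < 0))]
  have : (⟨s(3, 0), (cycleG 4).mem_edgeSet.mpr (by decide)⟩ : (cycleG 4).edgeSet) = f03 :=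
    Subtype.ext (by exact Sym2.eq_swap)
  rw [this]; rfl

lemma bv4_00 : bracketVtx (cycleG 4) 0 0 = 0 := bracketVtx_not_adj _ (by decide)
lemma bv4_11 : bracketVtx (cycleG 4) 1 1 = 0 := bracketVtx_not_adj _ (by decide)
lemma bv4_22 : bracketVtx (cycleG 4) 2 2 = 0 := bracketVtx_not_adj _ (by decide)
lemma bv4_33 : bracketVtx (cycleG 4) 3 3 = 0 := bracketVtx_not_adj _ (by decide)
lemma bv4_02 : bracketVtx (cycleG 4) 0 2 = 0 := bracketVtx_not_adj _ (by decide)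
lemma bv4_20 : bracketVtx (cycleG 4) 2 0 = 0 := bracketVtx_not_adj _ (by decide)
lemma bv4_13 : bracketVtx (cycleG 4) 1 3 = 0 := bracketVtx_not_adj _ (by decide)
lemma bv4_31 : bracketVtx (cycleG 4) 3 1 = 0 := bracketVtx_not_adj _ (by decide)

noncomputable def adapted4 : AdaptedCS (cycleG 4) := by
  refine mkAdapted t4 sg4 t4_invol sg4_pm sg4_prod ?_
  intro a b
  obtain ⟨h1, h2, h3, h4, h5, h6, h7, h8⟩ := t4_vals
  obtain ⟨g1, g2, g3, g4, g5, g6, g7, g8⟩ := sg4_vals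
  have J1 : mkJ (cycleG 4) t4 sg4 (basisVec _ (inl 0)) = (1 : ℝ) • basisVec _ (inl 2) := by
    rw [mkJ_basis t4_invol, h1, g3]
  have J2 : mkJ (cycleG 4) t4 sg4 (basisVec _ (inl 1)) = (1 : ℝ) • basisVec _ (inl 3) := by
    rw [mkJ_basis t4_invol, h2, g4]
  have J3 : mkJ (cycleG 4) t4 sg4 (basisVec _ (inl 2)) = (-1 : ℝ) • basisVec _ (inl 0) := by
    rw [mkJ_basis t4_invol, h3, g1]
  have J4 : mkJ (cycleG 4) t4 sg4 (basisVec _ (inl 3)) = (-1 : ℝ) • basisVec _ (inl 1) := by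
    rw [mkJ_basis t4_invol, h4, g2]
  have J5 : mkJ (cycleG 4) t4 sg4 (basisVec _ (inr f01)) = (-1 : ℝ) • basisVec _ (inr f12) := by
    rw [mkJ_basis t4_invol, h5, g6]
  have J6 : mkJ (cycleG 4) t4 sg4 (basisVec _ (inr f12)) = (1 : ℝ) • basisVec _ (inr f01) := by
    rw [mkJ_basis t4_invol, h6, g5]
  have J7 : mkJ (cycleG 4) t4 sg4 (basisVec _ (inr f23)) = (-1 : ℝ) • basisVec _ (inr f03) := by
    rw [mkJ_basis t4_invol, h7, g8]
  have J8 : mkJ (cycleG 4) t4 sg4 (basisVec _ (inr f03)) = (1 : ℝ) • basisVec _ (inr f23) := by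
    rw [mkJ_basis t4_invol, h8, g7]
  rcases basis4 a with rfl | rfl | rfl | rfl | rfl | rfl | rfl | rfl <;>
    rcases basis4 b with rfl | rfl | rfl | rfl | rfl | rfl | rfl | rfl <;>
    simp only [J1, J2, J3, J4, J5, J6, J7, J8, bracket_smul_left, bracket_smul_right,
      bracket_neg_left, bracket_neg_right,
      bracket_basis_inl_inl, bracket_inr_left, bracket_inr_right,
      bv4_00, bv4_01, bv4_02, bv4_03, bv4_10, bv4_11, bv4_12, bv4_13,
      bv4_20, bv4_21, bv4_22, bv4_23, bv4_30, bv4_31, bv4_32, bv4_33,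
      map_add, map_smul, map_neg, map_zero, smul_zero, smul_neg, neg_smul, neg_zero,
      add_zero, zero_add, sub_zero, zero_sub, one_smul, neg_neg] <;>
    module

end C4

/-- For every `n ≥ 3`, the cycle graph `C_n` admits an adapted complex
structure if and only if `n = 3` or `n = 4`. -/
theorem statement15 (n : ℕ) (hn : 3 ≤ n) :
    Nonempty (GraphLie.AdaptedCS (cycleG n)) ↔ n = 3 ∨ n = 4 := by
  constructor
  · rintro ⟨Jc⟩
    by_contra h
    push_neg at h
    have hn5 : 5 ≤ n := by
      rcases h with ⟨h3, h4⟩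
      omega
    exact CycleProof.no_adapted hn5 Jc
  · rintro (rfl | rfl)
    · exact ⟨adapted3⟩
    · exact ⟨adapted4⟩
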